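/- (Vanishing scaled penalty on non-fused pairs.) Under the one-way ANOVA model with group proportions n_k/n → ρ_k ∈ (0,∞), for every pair (k,ℓ) with β*_k ≠ β*_ℓ and every sequence λ_n > 0 satisfying λ_n n^{3/2} exp(−α √n |β*_k − β*_ℓ|^γ / 2) → 0, the scaled penalty weight λ_n w^{FA}_{kℓ} / √n converges to 0 in probability as n → ∞. -/

import Mathlib

open MeasureTheory ProbabilityTheory Filter Finset
open scoped NNReal ENNReal

noncomputable section

/-- Number of observations among the first `n` that belong to group `k`
(the group size `n_k`). -/
def groupSize {K : ℕ} (κ : ℕ → Fin K) (n : ℕ) (k : Fin K) : ℕ :=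
  ((Finset.range n).filter fun i => κ i = k).card

/-- Empirical mean `ȳ_k` of group `k` among the first `n` observations. -/
def groupMean {Ω : Type*} {K : ℕ} (κ : ℕ → Fin K) (y : ℕ → Ω → ℝ)
    (n : ℕ) (k : Fin K) (ω : Ω) : ℝ :=
  (∑ i ∈ (Finset.range n).filter fun i => κ i = k, y i ω) / (groupSize κ n k : ℝ)

/-- The fused-ANOVA weight `w^FA_{kl} = n_k n_l exp(-α √n |ȳ_k - ȳ_l|^γ)`. -/
def faWeight {Ω : Type*} {K : ℕ} (κ : ℕ → Fin K) (y : ℕ → Ω → ℝ) (α γ : ℝ)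
    (n : ℕ) (k l : Fin K) (ω : Ω) : ℝ :=
  (groupSize κ n k : ℝ) * (groupSize κ n l : ℝ) *
    Real.exp (-(α * Real.sqrt (n : ℕ) * |groupMean κ y n k ω - groupMean κ y n l ω| ^ γ))

open Topology

/-!
By Chebyshev's inequality each group mean deviates from its true value by at least `δ` with
probability at most `Var ε / (δ² n_k)`, which tends to `0` because `n_k ~ ρ_k n → ∞`.
Since `x ↦ |x|^γ` is continuous, once both group means are `δ`-close to `β⋆_k ≠ β⋆_l` we have
`|ȳ_k - ȳ_l|^γ > |β⋆_k - β⋆_l|^γ / 2`, and then `n_k, n_l ≤ n` give the deterministic bound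
`|λ_n w^FA_{kl} / √n| ≤ |λ_n| n^{3/2} exp(-α √n |β⋆_k - β⋆_l|^γ / 2)`, which tends to `0`.
-/

namespace ProbabilityTheory

variable {Ω ι : Type*} [MeasurableSpace Ω] {μ : Measure Ω}
  {X : ι → Ω → ℝ} {Y : Ω → ℝ} {δ : ℝ}

theorem meas_ge_abs_sum_div_card_sub_le [IsFiniteMeasure μ]
    (hindep : Pairwise fun i j => X i ⟂ᵢ[μ] X j)
    (hident : ∀ i, IdentDistrib (X i) Y μ μ) (hY : MemLp Y 2 μ) {s : Finset ι}
    (hs : s.Nonempty) (hδ : 0 < δ) :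
    μ {ω | δ ≤ |(∑ i ∈ s, X i ω) / #s - μ[Y]|} ≤
      ENNReal.ofReal (variance Y μ / (δ ^ 2 * #s)) := by
  have hm : (0 : ℝ) < #s := by exact_mod_cast hs.card_pos
  have hX : ∀ i ∈ s, MemLp (X i) 2 μ := fun i _ => (hident i).symm.memLp_snd hY
  have hmean : μ[(∑ i ∈ s, X i)] = (#s : ℝ) * μ[Y] := by
    simp only [Finset.sum_apply]
    rw [integral_finsetSum s fun i hi => (hX i hi).integrable one_le_two]
    simp [fun i => (hident i).integral_eq]
  have hvar : variance (∑ i ∈ s, X i) μ = (#s : ℝ) * variance Y μ := by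
    rw [IndepFun.variance_sum hX fun i _ j _ hij => hindep hij]
    simp [fun i => (hident i).variance_eq]
  have hsub : {ω | δ ≤ |(∑ i ∈ s, X i ω) / #s - μ[Y]|} ⊆
      {ω | δ * #s ≤ |(∑ i ∈ s, X i) ω - μ[(∑ i ∈ s, X i)]|} := by
    intro ω hω
    have hrescale : (∑ i ∈ s, X i ω) / #s - μ[Y] =
        ((∑ i ∈ s, X i) ω - μ[(∑ i ∈ s, X i)]) / #s := by
      rw [hmean, Finset.sum_apply]
      field_simp
    simpa only [Set.mem_ofPred_eq, hrescale, abs_div, abs_of_pos hm, le_div_iff₀ hm] using hω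
  calc μ {ω | δ ≤ |(∑ i ∈ s, X i ω) / #s - μ[Y]|}
      ≤ ENNReal.ofReal (variance (∑ i ∈ s, X i) μ / (δ * #s) ^ 2) :=
        (measure_mono hsub).trans <|
          meas_ge_le_variance_div_sq (memLp_finsetSum' s hX) (by positivity)
    _ = ENNReal.ofReal (variance Y μ / (δ ^ 2 * #s)) := by
        rw [hvar]
        congr 1
        field_simp

theorem tendsto_meas_ge_abs_sum_div_card_sub [IsFiniteMeasure μ] {α : Type*} {l : Filter α}
    {s : α → Finset ι}
    (hindep : Pairwise fun i j => X i ⟂ᵢ[μ] X j) (hident : ∀ i, IdentDistrib (X i) Y μ μ)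
    (hY : MemLp Y 2 μ) (hs : Tendsto (fun a => #(s a)) l atTop) (hδ : 0 < δ) :
    Tendsto (fun a => μ {ω | δ ≤ |(∑ i ∈ s a, X i ω) / #(s a) - μ[Y]|}) l (𝓝 0) := by
  have hbound : Tendsto (fun a => ENNReal.ofReal (variance Y μ / (δ ^ 2 * #(s a)))) l (𝓝 0) := by
    simpa using ENNReal.tendsto_ofReal <| tendsto_const_nhds.div_atTop <|
      (tendsto_natCast_atTop_iff.2 hs).const_mul_atTop (by positivity)
  refine tendsto_of_tendsto_of_tendsto_of_le_of_le' tendsto_const_nhds hbound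
    (Eventually.of_forall fun _ => zero_le) ?_
  filter_upwards [hs.eventually_ge_atTop 1] with a ha
  exact meas_ge_abs_sum_div_card_sub_le hindep hident hY (Finset.card_pos.1 ha) hδ

theorem tendsto_measure_of_eventually_subset_union {α : Type*} {l : Filter α}
    {A B C : α → Set Ω} (hAB : ∀ᶠ a in l, A a ⊆ B a ∪ C a)
    (hB : Tendsto (fun a => μ (B a)) l (𝓝 0)) (hC : Tendsto (fun a => μ (C a)) l (𝓝 0)) :
    Tendsto (fun a => μ (A a)) l (𝓝 0) := by
  refine tendsto_of_tendsto_of_tendsto_of_le_of_le' tendsto_const_nhds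
    (by simpa using hB.add hC) (Eventually.of_forall fun _ => zero_le) ?_
  filter_upwards [hAB] with a ha
  exact (measure_mono ha).trans (measure_union_le _ _)

end ProbabilityTheory

theorem exists_pos_lt_abs_sub_rpow {b b' γ c : ℝ} (hγ : 0 ≤ γ) (hc : c < |b - b'| ^ γ) :
    ∃ δ > 0, ∀ x x', |x - b| < δ → |x' - b'| < δ → c < |x - x'| ^ γ := by
  have hcont : Continuous fun p : ℝ × ℝ => |p.1 - p.2| ^ γ :=
    (Real.continuous_rpow_const hγ).comp (continuous_fst.sub continuous_snd).abs
  obtain ⟨δ, hδ, hball⟩ :=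
    Metric.eventually_nhds_iff.1 ((hcont.tendsto (b, b')).eventually (lt_mem_nhds hc))
  refine ⟨δ, hδ, fun x x' hx hx' => hball (y := (x, x')) ?_⟩
  rw [Prod.dist_eq, Real.dist_eq, Real.dist_eq]
  exact max_lt hx hx'

theorem sq_div_sqrt_eq_rpow_three_halves {x : ℝ} (hx : 0 ≤ x) :
    x ^ 2 / √x = x ^ ((3 : ℝ) / 2) := by
  rw [show (3 : ℝ) / 2 = 1 + 1 / 2 by norm_num, Real.rpow_add' hx (by norm_num), Real.rpow_one,
    ← Real.sqrt_eq_rpow, sq, mul_div_assoc, Real.div_sqrt]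

section FusedANOVA

variable {Ω : Type*} {K : ℕ} (κ : ℕ → Fin K)

theorem groupSize_le (n : ℕ) (k : Fin K) : groupSize κ n k ≤ n :=
  (Finset.card_filter_le _ _).trans_eq (Finset.card_range n)

theorem tendsto_groupSize_atTop {k : Fin K} {ρ : ℝ} (hρ : 0 < ρ)
    (hprop : Tendsto (fun n => (groupSize κ n k : ℝ) / n) atTop (𝓝 ρ)) :
    Tendsto (groupSize κ · k) atTop atTop := by
  refine tendsto_natCast_atTop_iff.1 <|
    (hprop.pos_mul_atTop hρ tendsto_natCast_atTop_atTop).congr' ?_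
  filter_upwards [eventually_ne_atTop 0] with n hn
  field_simp

theorem groupMean_comp_add (β : Fin K → ℝ) (ε : ℕ → Ω → ℝ) {n : ℕ} {k : Fin K}
    (hn : groupSize κ n k ≠ 0) (ω : Ω) :
    groupMean κ (fun i ω => β (κ i) + ε i ω) n k ω = β k + groupMean κ ε n k ω := by
  have hβ : ∀ i ∈ (range n).filter fun i => κ i = k, β (κ i) + ε i ω = β k + ε i ω := by
    intro i hi
    rw [(Finset.mem_filter.1 hi).2]
  simp only [groupMean, Finset.sum_congr rfl hβ, Finset.sum_add_distrib, Finset.sum_const,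
    nsmul_eq_mul, add_div]
  have hn' : (groupSize κ n k : ℝ) ≠ 0 := by exact_mod_cast hn
  rw [← groupSize, mul_div_cancel_left₀ _ hn']

theorem abs_mul_faWeight_div_sqrt_le (y : ℕ → Ω → ℝ) {α γ d : ℝ} (hα : 0 ≤ α) (lam : ℝ)
    (n : ℕ) (k l : Fin K) (ω : Ω)
    (hd : d / 2 ≤ |groupMean κ y n k ω - groupMean κ y n l ω| ^ γ) :
    |lam * faWeight κ y α γ n k l ω / √n| ≤
      |lam * (n : ℝ) ^ ((3 : ℝ) / 2) * Real.exp (-(α * √n * d) / 2)| := by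
  have hsize : (groupSize κ n k : ℝ) * groupSize κ n l ≤ (n : ℝ) ^ 2 := by
    rw [sq]
    exact mul_le_mul (by exact_mod_cast groupSize_le κ n k) (by exact_mod_cast groupSize_le κ n l)
      (by positivity) (by positivity)
  have hexp : Real.exp (-(α * √n * |groupMean κ y n k ω - groupMean κ y n l ω| ^ γ)) ≤
      Real.exp (-(α * √n * d) / 2) := by
    rw [neg_div, mul_div_assoc]
    gcongr
  have hweight : faWeight κ y α γ n k l ω ≤ (n : ℝ) ^ 2 * Real.exp (-(α * √n * d) / 2) :=
    mul_le_mul hsize hexp (by positivity) (by positivity)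
  have hnonneg : 0 ≤ faWeight κ y α γ n k l ω := by unfold faWeight; positivity
  rw [abs_div, abs_mul, abs_mul, abs_mul, abs_of_nonneg hnonneg,
    abs_of_nonneg (Real.sqrt_nonneg _), abs_of_pos (Real.exp_pos _),
    abs_of_nonneg (Real.rpow_nonneg n.cast_nonneg _),
    ← sq_div_sqrt_eq_rpow_three_halves (Nat.cast_nonneg n)]
  calc |lam| * faWeight κ y α γ n k l ω / √n
      ≤ |lam| * ((n : ℝ) ^ 2 * Real.exp (-(α * √n * d) / 2)) / √n := by gcongr
    _ = |lam| * ((n : ℝ) ^ 2 / √n) * Real.exp (-(α * √n * d) / 2) := by ring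

end FusedANOVA

theorem fusedANOVA_scaled_penalty_vanishes_on_nonfused_pair_general
    {Ω : Type*} [MeasureSpace Ω] [IsProbabilityMeasure (ℙ : Measure Ω)]
    {K : ℕ} (κ : ℕ → Fin K) (βstar : Fin K → ℝ) (ε : ℕ → Ω → ℝ)
    (hindep : iIndepFun ε ℙ)
    (hident : ∀ i, IdentDistrib (ε i) (ε 0) ℙ ℙ)
    (hL2 : MemLp (ε 0) 2 ℙ) (hmean : ∫ ω, ε 0 ω ∂ℙ = 0)
    (y : ℕ → Ω → ℝ) (hy : y = fun i ω => βstar (κ i) + ε i ω)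
    (ρ : Fin K → ℝ) (hρ : ∀ k, 0 < ρ k)
    (hprop : ∀ k, Tendsto (fun n => (groupSize κ n k : ℝ) / n) atTop (nhds (ρ k)))
    (α γ : ℝ) (hα : 0 < α) (hγ : 0 < γ)
    (lam : ℕ → ℝ)
    (k l : Fin K) (hkl : βstar k ≠ βstar l)
    (hlam0 : Tendsto (fun n => lam n * (n : ℝ) ^ ((3 : ℝ) / 2) *
        Real.exp (-(α * Real.sqrt n * |βstar k - βstar l| ^ γ) / 2)) atTop (nhds 0)) :
    TendstoInMeasure ℙ (fun n : ℕ => fun ω => lam n * faWeight κ y α γ n k l ω / Real.sqrt n)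
      atTop (fun _ => (0 : ℝ)) := by
  rw [tendstoInMeasure_iff_dist]
  intro η hη
  obtain ⟨δ, hδ, hsep⟩ := exists_pos_lt_abs_sub_rpow hγ.le
    (half_lt_self (Real.rpow_pos_of_pos (abs_pos.2 (sub_ne_zero.2 hkl)) γ))
  have hsize (j : Fin K) : Tendsto (groupSize κ · j) atTop atTop :=
    tendsto_groupSize_atTop κ (hρ j) (hprop j)
  have hdev (j : Fin K) : Tendsto (fun n => ℙ {ω | δ ≤ |groupMean κ ε n j ω|}) atTop (𝓝 0) := by
    simpa [groupMean, groupSize, hmean] using tendsto_meas_ge_abs_sum_div_card_sub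
      (fun i j hij => hindep.indepFun hij) hident hL2 (hsize j) hδ
  refine tendsto_measure_of_eventually_subset_union ?_ (hdev k) (hdev l)
  filter_upwards [(hsize k).eventually_ne_atTop 0, (hsize l).eventually_ne_atTop 0,
    hlam0.abs.eventually (gt_mem_nhds (by rwa [abs_zero] : |(0 : ℝ)| < η))] with n hk hl hn ω hω
  by_contra hgood
  simp only [Set.mem_union, Set.mem_ofPred_eq, not_or, not_le] at hgood
  have hsep' : |βstar k - βstar l| ^ γ / 2 < |groupMean κ y n k ω - groupMean κ y n l ω| ^ γ := by
    subst hy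
    rw [groupMean_comp_add κ βstar ε hk, groupMean_comp_add κ βstar ε hl]
    exact hsep _ _ (by simpa using hgood.1) (by simpa using hgood.2)
  rw [Set.mem_ofPred_eq, Real.dist_0_eq_abs] at hω
  exact (hω.trans (abs_mul_faWeight_div_sqrt_le κ y hα.le _ n k l ω hsep'.le)).not_gt hn

/-- **Vanishing scaled penalty on non-fused pairs.**  For a pair `(k, l)` with
`β⋆_k ≠ β⋆_l` and `λ_n > 0` with `λ_n n^{3/2} exp(-α √n |β⋆_k - β⋆_l|^γ / 2) → 0`,
the scaled penalty weight `λ_n w^FA_{kl} / √n` tends to `0` in probability. -/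
theorem fusedANOVA_scaled_penalty_vanishes_on_nonfused_pair
    {Ω : Type*} [MeasureSpace Ω] [IsProbabilityMeasure (ℙ : Measure Ω)]
    {K : ℕ} (κ : ℕ → Fin K) (βstar : Fin K → ℝ) (ε : ℕ → Ω → ℝ)
    (hmeas : ∀ i, Measurable (ε i))
    (hindep : iIndepFun ε ℙ)
    (hident : ∀ i, IdentDistrib (ε i) (ε 0) ℙ ℙ)
    (hL2 : MemLp (ε 0) 2 ℙ) (hmean : ∫ ω, ε 0 ω ∂ℙ = 0)
    (σ : ℝ) (hσ : 0 < σ) (hvar : variance (ε 0) ℙ = σ ^ 2)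
    (y : ℕ → Ω → ℝ) (hy : y = fun i ω => βstar (κ i) + ε i ω)
    (ρ : Fin K → ℝ) (hρ : ∀ k, 0 < ρ k)
    (hprop : ∀ k, Tendsto (fun n => (groupSize κ n k : ℝ) / n) atTop (nhds (ρ k)))
    (α γ : ℝ) (hα : 0 < α) (hγ : 0 < γ)
    (lam : ℕ → ℝ) (hlam : ∀ n, 0 < lam n)
    (k l : Fin K) (hkl : βstar k ≠ βstar l)
    (hlam0 : Tendsto (fun n => lam n * (n : ℝ) ^ ((3 : ℝ) / 2) *
        Real.exp (-(α * Real.sqrt n * |βstar k - βstar l| ^ γ) / 2)) atTop (nhds 0)) :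
    TendstoInMeasure ℙ (fun n : ℕ => fun ω => lam n * faWeight κ y α γ n k l ω / Real.sqrt n)
      atTop (fun _ => (0 : ℝ)) :=
  fusedANOVA_scaled_penalty_vanishes_on_nonfused_pair_general κ βstar ε hindep hident hL2 hmean y hy
    ρ hρ hprop α γ hα hγ lam k l hkl hlam0
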